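/- arXiv:math/0310322 — 2 statements merged into one kernel-verified Lean document; each statement's English description precedes it below -/
import Mathlib

section
/- Let Δ be a connected graph of diameter 2, N an Abelian group, ℓ : D(Δ) → N a voltage assignment, and S ≤ N a subgroup containing the voltage of every cycle of length at most 5 in Δ. Then the voltage of every cycle in Δ lies in S. -/
/-!
Split a closed walk of length `> 2r + 1` after its first `r + 1` steps and join the two cut
points by a walk `s` of length `≤ r`. Going out along `s` and back cancels by antisymmetry, so
the voltage is the sum of the voltages of a closed walk of length `≤ 2r + 1` and of a strictly
shorter closed walk; induct on the length. Diameter 2 is the case `r = 2`.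
-/

namespace SimpleGraph.Walk

variable {V N : Type*} [AddCommGroup N] {G : SimpleGraph V} (ℓ : V → V → N)

def voltage {u v : V} (p : G.Walk u v) : N :=
  (p.darts.map fun d ↦ ℓ d.fst d.snd).sum

@[simp]
lemma voltage_nil {u : V} : (nil : G.Walk u u).voltage ℓ = 0 := rfl

@[simp]
lemma voltage_cons {u v w : V} (h : G.Adj u v) (p : G.Walk v w) :
    (cons h p).voltage ℓ = ℓ u v + p.voltage ℓ := by
  simp [voltage]

@[simp]
lemma voltage_copy {u v u' v' : V} (p : G.Walk u v) (hu : u = u') (hv : v = v') :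
    (p.copy hu hv).voltage ℓ = p.voltage ℓ := by
  subst hu hv; rfl

@[simp]
lemma voltage_append {u v w : V} (p : G.Walk u v) (q : G.Walk v w) :
    (p.append q).voltage ℓ = p.voltage ℓ + q.voltage ℓ := by
  simp [voltage]

variable {ℓ}

lemma voltage_reverse (hℓ : ∀ u v, G.Adj u v → ℓ u v = -ℓ v u) {u v : V} (p : G.Walk u v) :
    p.reverse.voltage ℓ = -p.voltage ℓ := by
  induction p with
  | nil => simp
  | cons h p ih => simp [ih, hℓ _ _ h, add_comm]

lemma voltage_append_eq_add_of_shortcut (hℓ : ∀ u v, G.Adj u v → ℓ u v = -ℓ v u) {u v w : V}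
    (p : G.Walk u w) (q : G.Walk w v) (s : G.Walk u w) :
    (p.append q).voltage ℓ = (p.append s.reverse).voltage ℓ + (s.append q).voltage ℓ := by
  simp only [voltage_append, voltage_reverse hℓ]
  abel

lemma voltage_eq_sum_getVert {u v : V} (p : G.Walk u v) :
    p.voltage ℓ = ∑ i ∈ Finset.range p.length, ℓ (p.getVert i) (p.getVert (i + 1)) := by
  induction p with
  | nil => rfl
  | cons h p ih =>
    rw [voltage_cons, ih, length_cons, Finset.sum_range_succ', add_comm]
    simp [getVert_cons_succ]

theorem voltage_mem_of_forall_length_le (hℓ : ∀ u v, G.Adj u v → ℓ u v = -ℓ v u)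
    {S : AddSubgroup N} {r : ℕ} (hdist : ∀ u v : V, ∃ s : G.Walk u v, s.length ≤ r)
    (hshort : ∀ (u : V) (p : G.Walk u u), p.length ≤ 2 * r + 1 → p.voltage ℓ ∈ S)
    {u : V} (p : G.Walk u u) : p.voltage ℓ ∈ S := by
  induction hn : p.length using Nat.strong_induction_on generalizing u with
  | _ n ih =>
  by_cases hp : p.length ≤ 2 * r + 1
  · exact hshort u p hp
  obtain ⟨s, hs⟩ := hdist u (p.getVert (r + 1))
  rw [← p.append_take_drop_eq (r + 1), voltage_append_eq_add_of_shortcut hℓ _ _ s]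
  refine add_mem (hshort _ _ ?_) (ih _ ?_ _ rfl)
  · simp only [length_append, take_length, length_reverse]; omega
  · simp only [length_append, drop_length]; omega

variable (ℓ) in
lemma exists_walk_voltage_eq_sum : ∀ {k : ℕ} (c : Fin (k + 1) → V),
    (∀ j : Fin k, G.Adj (c j.castSucc) (c j.succ)) →
    ∃ p : G.Walk (c 0) (c (Fin.last k)), p.voltage ℓ = ∑ j : Fin k, ℓ (c j.castSucc) (c j.succ)
  | 0, _, _ => ⟨nil, by simp⟩
  | _ + 1, c, hc =>
    let ⟨q, hq⟩ := exists_walk_voltage_eq_sum (fun i ↦ c i.succ) (fun j ↦ hc j.succ)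
    ⟨cons (hc 0) q, (voltage_cons ℓ (hc 0) q).trans (by rw [hq, Fin.sum_univ_succ]; rfl)⟩

end SimpleGraph.Walk

theorem cycle_voltages_from_short_cycles_general {V N : Type*} [AddCommGroup N]
    (Δ : SimpleGraph V) (ℓ : V → V → N)
    (hℓ : ∀ u v, Δ.Adj u v → ℓ u v = - ℓ v u)
    -- diameter 2: any two vertices are joined by a path of length at most 2
    (hdiam : ∀ u v : V, u = v ∨ Δ.Adj u v ∨ ∃ w, Δ.Adj u w ∧ Δ.Adj w v)
    (S : AddSubgroup N)
    -- S contains the voltage of every cycle of length at most 5: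
    (hshort : ∀ (k : ℕ), k ≤ 5 → ∀ c : Fin (k + 1) → V,
      c 0 = c (Fin.last k) → (∀ j : Fin k, Δ.Adj (c j.castSucc) (c j.succ)) →
      (∑ j : Fin k, ℓ (c j.castSucc) (c j.succ)) ∈ S) :
    -- then S contains the voltage of every cycle:
    ∀ (k : ℕ) (c : Fin (k + 1) → V),
      c 0 = c (Fin.last k) → (∀ j : Fin k, Δ.Adj (c j.castSucc) (c j.succ)) →
      (∑ j : Fin k, ℓ (c j.castSucc) (c j.succ)) ∈ S := by
  have hdist : ∀ u v : V, ∃ s : Δ.Walk u v, s.length ≤ 2 := by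
    intro u v
    rcases hdiam u v with rfl | huv | ⟨w, huw, hwv⟩
    · exact ⟨.nil, by simp⟩
    · exact ⟨huv.toWalk, by simp⟩
    · exact ⟨.cons huw hwv.toWalk, by simp⟩
  have hshortWalk : ∀ (u : V) (p : Δ.Walk u u), p.length ≤ 2 * 2 + 1 → p.voltage ℓ ∈ S := by
    intro u p hp
    rw [p.voltage_eq_sum_getVert, ← Fin.sum_univ_eq_sum_range]
    exact hshort p.length hp (fun j ↦ p.getVert j) (by simp) (fun j ↦ p.adj_getVert_succ j.2)
  intro k c hc hadj
  obtain ⟨p, hp⟩ := SimpleGraph.Walk.exists_walk_voltage_eq_sum ℓ c hadj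
  rw [← hp, ← p.voltage_copy ℓ rfl hc.symm]
  exact SimpleGraph.Walk.voltage_mem_of_forall_length_le hℓ hdist hshortWalk _

/-- in a connected graph of diameter 2, if a subgroup `S` of the (Abelian)
voltage group contains the voltage of every cycle of length at most 5, then it contains the
voltage of every cycle. -/
theorem cycle_voltages_from_short_cycles {V N : Type*} [AddCommGroup N]
    (Δ : SimpleGraph V) (ℓ : V → V → N)
    (hℓ : ∀ u v, Δ.Adj u v → ℓ u v = - ℓ v u)
    (hconn : Δ.Connected)
    -- diameter 2: any two vertices are joined by a path of length at most 2
    (hdiam : ∀ u v : V, u = v ∨ Δ.Adj u v ∨ ∃ w, Δ.Adj u w ∧ Δ.Adj w v)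
    (S : AddSubgroup N)
    -- S contains the voltage of every cycle of length at most 5:
    (hshort : ∀ (k : ℕ), k ≤ 5 → ∀ c : Fin (k + 1) → V,
      c 0 = c (Fin.last k) → (∀ j : Fin k, Δ.Adj (c j.castSucc) (c j.succ)) →
      (∑ j : Fin k, ℓ (c j.castSucc) (c j.succ)) ∈ S) :
    -- then S contains the voltage of every cycle:
    ∀ (k : ℕ) (c : Fin (k + 1) → V),
      c 0 = c (Fin.last k) → (∀ j : Fin k, Δ.Adj (c j.castSucc) (c j.succ)) →
      (∑ j : Fin k, ℓ (c j.castSucc) (c j.succ)) ∈ S :=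
  cycle_voltages_from_short_cycles_general Δ ℓ hℓ hdiam S hshort
end

section
/- Let 𝔽 have characteristic 2 and V = 𝔽⁴ with basis e₁,…,e₄ and dual basis f₁,…,f₄. In H̃₃(𝔽) with the voltage assignment ℓ(v₁⊗h₁, v₂⊗h₂) = h₁(v₁)⁻¹h₂(v₂)⁻¹(v₁∧v₂)(h₁∧h₂)^φ, for any λ ∈ 𝔽 the quadrangle (e₁ ⊗ f₁), (e₃ ⊗ f₃), (e₁ ⊗ (f₁+f₄)), ((e₃+λe₂) ⊗ f₃) is a 4-cycle whose voltage equals λ·(e₁ ∧ e₂)² ∈ S₂(Λ²V). -/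
open Module

set_option synthInstance.maxHeartbeats 1000000
set_option maxHeartbeats 1000000

/-- The wedge `v ∧ w` as an element of the second exterior power `⋀[𝔽]^2 V`. -/
noncomputable def wedge2 (𝔽 : Type*) {V : Type*} [Field 𝔽] [AddCommGroup V] [Module 𝔽 V]
    (v w : V) : ⋀[𝔽]^2 V :=
  ⟨ExteriorAlgebra.ιMulti 𝔽 2 ![v, w],
   ExteriorAlgebra.ιMulti_range 𝔽 2 (Set.mem_range_self _)⟩

/-- The wedge `v₁ ∧ v₂ ∧ v₃ ∧ v₄` as an element of the fourth exterior power `⋀[𝔽]^4 V`. -/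
noncomputable def wedge4 (𝔽 : Type*) {V : Type*} [Field 𝔽] [AddCommGroup V] [Module 𝔽 V]
    (v₁ v₂ v₃ v₄ : V) : ⋀[𝔽]^4 V :=
  ⟨ExteriorAlgebra.ιMulti 𝔽 4 ![v₁, v₂, v₃, v₄],
   ExteriorAlgebra.ιMulti_range 𝔽 4 (Set.mem_range_self _)⟩

/-- The wedge product `⋀[𝔽]^2 V × ⋀[𝔽]^2 V → ⋀[𝔽]^4 V`. -/
noncomputable def wmul {𝔽 V : Type*} [Field 𝔽] [AddCommGroup V] [Module 𝔽 V]
    (a b : ⋀[𝔽]^2 V) : ⋀[𝔽]^4 V :=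
  ⟨a.1 * b.1, by
    have h : (⋀[𝔽]^4 V) = ⋀[𝔽]^2 V * ⋀[𝔽]^2 V := by
      rw [show (4 : ℕ) = 2 + 2 by norm_num]
      exact pow_add _ 2 2
    exact h ▸ Submodule.mul_mem_mul a.2 b.2⟩

/-- The relation submodule defining the symmetric square. -/
def symRel (𝔽 W : Type*) [Field 𝔽] [AddCommGroup W] [Module 𝔽 W] :
    Submodule 𝔽 (TensorProduct 𝔽 W W) :=
  Submodule.span 𝔽 {x | ∃ v w : W, x = v ⊗ₜ[𝔽] w - w ⊗ₜ[𝔽] v}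

/-- The symmetric square `S₂(W) = (W ⊗ W)/⟨v⊗w − w⊗v⟩`. -/
abbrev SymSq (𝔽 W : Type*) [Field 𝔽] [AddCommGroup W] [Module 𝔽 W] :=
  TensorProduct 𝔽 W W ⧸ symRel 𝔽 W

/-- The symmetric product `vw ∈ S₂(W)`. -/
noncomputable def symMul (𝔽 : Type*) {W : Type*} [Field 𝔽] [AddCommGroup W] [Module 𝔽 W] (v w : W) :
    SymSq 𝔽 W :=
  Submodule.Quotient.mk (v ⊗ₜ[𝔽] w)

/-- The square `w² ∈ S₂(W)`. -/
noncomputable def sqS (𝔽 : Type*) {W : Type*} [Field 𝔽] [AddCommGroup W] [Module 𝔽 W] (w : W) : SymSq 𝔽 W :=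
  symMul 𝔽 w w

/-- The affine non-incident point-hyperplane graph `H̃₃(𝔽)` (for `V = 𝔽⁴`): vertices are pairs
`(v, h)` with `h v ≠ 0` (representing the simple tensor `v ⊗ h`), adjacency is mutual
annihilation. -/
def affPH (𝔽 V : Type*) [Field 𝔽] [AddCommGroup V] [Module 𝔽 V] :
    SimpleGraph {p : V × Module.Dual 𝔽 V // p.2 p.1 ≠ 0} where
  Adj a b := a.1.2 b.1.1 = 0 ∧ b.1.2 a.1.1 = 0
  symm := ⟨fun _ _ h => ⟨h.2, h.1⟩⟩
  loopless := ⟨fun a h => a.2 h.1⟩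

/-- The voltage assignment `ℓ` on `H̃₃(𝔽)`: the dart from `v₁ ⊗ h₁` to `v₂ ⊗ h₂` gets the
voltage `h₁(v₁)⁻¹ h₂(v₂)⁻¹ (v₁ ∧ v₂)(h₁ ∧ h₂)^φ ∈ S₂(Λ²V)`, where `φ` identifies `Λ²(V*)`
with `Λ²V`. -/
noncomputable def volt {𝔽 V : Type*} [Field 𝔽] [AddCommGroup V] [Module 𝔽 V]
    (φ : (⋀[𝔽]^2 (Module.Dual 𝔽 V)) →ₗ[𝔽] ⋀[𝔽]^2 V)
    (a b : {p : V × Module.Dual 𝔽 V // p.2 p.1 ≠ 0}) : SymSq 𝔽 (⋀[𝔽]^2 V) :=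
  ((a.1.2 a.1.1)⁻¹ * (b.1.2 b.1.1)⁻¹) •
    symMul 𝔽 (wedge2 𝔽 a.1.1 b.1.1) (φ (wedge2 𝔽 a.1.2 b.1.2))

section Quadrangle

variable (𝔽 : Type*) [Field 𝔽]

/-- The standard basis vector `eᵢ` of `𝔽⁴`. -/
noncomputable def e17 (i : Fin 4) : Fin 4 → 𝔽 := Pi.single i 1

/-- The dual basis vector `fᵢ`. -/
def f17 (i : Fin 4) : Module.Dual 𝔽 (Fin 4 → 𝔽) := LinearMap.proj i

/-- The vertex `e₁ ⊗ f₁` of `H̃₃(𝔽)`. -/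
noncomputable def q17_0 : {p : (Fin 4 → 𝔽) × Module.Dual 𝔽 (Fin 4 → 𝔽) // p.2 p.1 ≠ 0} :=
  ⟨(e17 𝔽 0, f17 𝔽 0), by simp [e17, f17]⟩

/-- The vertex `e₃ ⊗ f₃`. -/
noncomputable def q17_1 : {p : (Fin 4 → 𝔽) × Module.Dual 𝔽 (Fin 4 → 𝔽) // p.2 p.1 ≠ 0} :=
  ⟨(e17 𝔽 2, f17 𝔽 2), by simp [e17, f17]⟩

/-- The vertex `e₁ ⊗ (f₁ + f₄)`. -/
noncomputable def q17_2 : {p : (Fin 4 → 𝔽) × Module.Dual 𝔽 (Fin 4 → 𝔽) // p.2 p.1 ≠ 0} :=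
  ⟨(e17 𝔽 0, f17 𝔽 0 + f17 𝔽 3), by simp [e17, f17]⟩

/-- The vertex `(e₃ + λe₂) ⊗ f₃`. -/
noncomputable def q17_3 (lam : 𝔽) :
    {p : (Fin 4 → 𝔽) × Module.Dual 𝔽 (Fin 4 → 𝔽) // p.2 p.1 ≠ 0} :=
  ⟨(e17 𝔽 2 + lam • e17 𝔽 1, f17 𝔽 2), by simp [e17, f17]⟩

end Quadrangle

/-! Every vertex of the quadrangle has `h(v) = 1`, so each dart carries the plain symmetric
product `(v₁ ∧ v₂)(h₁ ∧ h₂)^φ`. With `A = e₁∧e₃`, `B = e₁∧e₂`, `P = (f₁∧f₃)^φ`, `Q = (f₃∧f₄)^φ`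
and signs invisible in characteristic 2, the four voltages are `AP`, `A(P+Q)`, `(A+λB)(P+Q)` and
`(A+λB)P`, whose sum is `λBQ`. It remains to see `Q = B`: the defining property of `φ` fixes the
wedge pairing of `Q` with every `e_k ∧ e_l`, and in characteristic 2 a wedge of four standard
basis vectors is `e₁∧e₂∧e₃∧e₄` when they are distinct and `0` otherwise, which reads off the
coordinates of `Q`. -/

open ExteriorAlgebra

lemma neg_eq_self_of_charTwo (R : Type*) {M : Type*} [Ring R] [CharP R 2] [AddCommGroup M]
    [Module R M] (x : M) : -x = x := by
  rw [← neg_one_smul R, CharTwo.neg_eq, one_smul]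

lemma units_int_smul_eq_self_of_charTwo (R : Type*) {M : Type*} [Ring R] [CharP R 2]
    [AddCommGroup M] [Module R M] (u : ℤˣ) (x : M) : u • x = x := by
  rcases Int.units_eq_one_or u with rfl | rfl
  · exact one_smul _ x
  · rw [Units.neg_smul, one_smul, neg_eq_self_of_charTwo R]

section Wedge

variable {𝔽 V : Type*} [Field 𝔽] [AddCommGroup V] [Module 𝔽 V]

lemma coe_wedge2 (v w : V) : (wedge2 𝔽 v w : ExteriorAlgebra 𝔽 V) = ι 𝔽 v * ι 𝔽 w := by
  simp [wedge2, ιMulti_apply]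

lemma coe_wedge4 (v₁ v₂ v₃ v₄ : V) :
    (wedge4 𝔽 v₁ v₂ v₃ v₄ : ExteriorAlgebra 𝔽 V) = ι 𝔽 v₁ * ι 𝔽 v₂ * ι 𝔽 v₃ * ι 𝔽 v₄ := by
  simp [wedge4, ιMulti_apply, mul_assoc]

lemma wedge4_eq_ιMulti (v : Fin 4 → V) :
    wedge4 𝔽 (v 0) (v 1) (v 2) (v 3) = exteriorPower.ιMulti 𝔽 4 v := by
  rw [show v = ![v 0, v 1, v 2, v 3] by ext k; fin_cases k <;> rfl]
  rfl

lemma coe_wmul (a b : ⋀[𝔽]^2 V) : (wmul a b : ExteriorAlgebra 𝔽 V) = a * b := rfl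

lemma wedge2_self (v : V) : wedge2 𝔽 v v = 0 :=
  Subtype.ext <| by simp [coe_wedge2]

lemma wedge2_swap (v w : V) : wedge2 𝔽 w v = -wedge2 𝔽 v w :=
  Subtype.ext <| by simp [coe_wedge2, eq_neg_of_add_eq_zero_left (ι_add_mul_swap w v)]

lemma wedge2_comm [CharP 𝔽 2] (v w : V) : wedge2 𝔽 w v = wedge2 𝔽 v w := by
  rw [wedge2_swap, neg_eq_self_of_charTwo 𝔽]

lemma wedge2_add_left (u v w : V) : wedge2 𝔽 (u + v) w = wedge2 𝔽 u w + wedge2 𝔽 v w :=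
  Subtype.ext <| by simp [coe_wedge2, add_mul]

lemma wedge2_add_right (u v w : V) : wedge2 𝔽 u (v + w) = wedge2 𝔽 u v + wedge2 𝔽 u w :=
  Subtype.ext <| by simp [coe_wedge2, mul_add]

lemma wedge2_smul_left (c : 𝔽) (u v : V) : wedge2 𝔽 (c • u) v = c • wedge2 𝔽 u v :=
  Subtype.ext <| by simp [coe_wedge2]

lemma wedge2_smul_right (c : 𝔽) (u v : V) : wedge2 𝔽 u (c • v) = c • wedge2 𝔽 u v :=
  Subtype.ext <| by simp [coe_wedge2]

lemma wmul_wedge2_wedge2 (v₁ v₂ v₃ v₄ : V) :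
    wmul (wedge2 𝔽 v₁ v₂) (wedge2 𝔽 v₃ v₄) = wedge4 𝔽 v₁ v₂ v₃ v₄ :=
  Subtype.ext <| by simp [coe_wmul, coe_wedge2, coe_wedge4, mul_assoc]

lemma wmul_sum_smul {I : Type*} (s : Finset I) (a : ⋀[𝔽]^2 V) (c : I → 𝔽)
    (y : I → ⋀[𝔽]^2 V) : wmul a (∑ p ∈ s, c p • y p) = ∑ p ∈ s, c p • wmul a (y p) :=
  Subtype.ext <| by simp [coe_wmul, Finset.mul_sum]

lemma exists_sum_smul_wedge2_eq {I : Type*} [Fintype I] (b : Basis I 𝔽 V) (x : ⋀[𝔽]^2 V) :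
    ∃ c : I × I → 𝔽, ∑ p, c p • wedge2 𝔽 (b p.1) (b p.2) = x := by
  refine (Submodule.mem_span_range_iff_exists_fun 𝔽).1 ?_
  suffices h : ⊤ ≤ Submodule.span 𝔽 (Set.range fun p : I × I => wedge2 𝔽 (b p.1) (b p.2)) from
    h trivial
  rw [← exteriorPower.ιMulti_span_of_span 𝔽 2 V b.span_eq, Submodule.span_le]
  rintro - ⟨a, ha, rfl⟩
  obtain ⟨i, hi⟩ := ha ⟨0, rfl⟩
  obtain ⟨j, hj⟩ := ha ⟨1, rfl⟩
  refine Submodule.subset_span ⟨(i, j), ?_⟩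
  rw [show a = ![b i, b j] by ext k; fin_cases k <;> simp [hi, hj]]
  rfl

end Wedge

section SymSq

variable {𝔽 W : Type*} [Field 𝔽] [AddCommGroup W] [Module 𝔽 W]

lemma symMul_add_left (a b w : W) : symMul 𝔽 (a + b) w = symMul 𝔽 a w + symMul 𝔽 b w := by
  simp [symMul, TensorProduct.add_tmul]

lemma symMul_add_right (a b w : W) : symMul 𝔽 w (a + b) = symMul 𝔽 w a + symMul 𝔽 w b := by
  simp [symMul, TensorProduct.tmul_add]

lemma symMul_smul_left (c : 𝔽) (a w : W) : symMul 𝔽 (c • a) w = c • symMul 𝔽 a w := by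
  simp [symMul, TensorProduct.smul_tmul', ← Submodule.Quotient.mk_smul]

lemma symMul_quadrangle_sum_of_charTwo [CharP 𝔽 2] (A B P Q : W) (lam : 𝔽) :
    symMul 𝔽 A P + symMul 𝔽 A (P + Q) + symMul 𝔽 (A + lam • B) (P + Q) +
      symMul 𝔽 (A + lam • B) P = lam • symMul 𝔽 B Q := by
  simp only [symMul_add_left, symMul_add_right, symMul_smul_left]
  linear_combination (norm := module) (CharTwo.two_eq_zero (R := 𝔽)) •
    (2 • symMul 𝔽 A P + symMul 𝔽 A Q + lam • symMul 𝔽 B P)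

end SymSq

lemma volt_eq_symMul {𝔽 V : Type*} [Field 𝔽] [AddCommGroup V] [Module 𝔽 V]
    (φ : (⋀[𝔽]^2 (Module.Dual 𝔽 V)) →ₗ[𝔽] ⋀[𝔽]^2 V)
    (a b : {p : V × Module.Dual 𝔽 V // p.2 p.1 ≠ 0}) (ha : a.1.2 a.1.1 = 1)
    (hb : b.1.2 b.1.1 = 1) :
    volt φ a b = symMul 𝔽 (wedge2 𝔽 a.1.1 b.1.1) (φ (wedge2 𝔽 a.1.2 b.1.2)) := by
  simp [volt, ha, hb]

section Standard

variable {𝔽 : Type*} [Field 𝔽] [CharP 𝔽 2]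

lemma wedge4_e17_of_charTwo (a b c d : Fin 4) :
    wedge4 𝔽 (e17 𝔽 a) (e17 𝔽 b) (e17 𝔽 c) (e17 𝔽 d) =
      if Function.Injective ![a, b, c, d] then wedge4 𝔽 (e17 𝔽 0) (e17 𝔽 1) (e17 𝔽 2) (e17 𝔽 3)
      else 0 := by
  rw [show wedge4 𝔽 (e17 𝔽 a) (e17 𝔽 b) (e17 𝔽 c) (e17 𝔽 d) =
      exteriorPower.ιMulti 𝔽 4 (e17 𝔽 ∘ ![a, b, c, d]) from
        wedge4_eq_ιMulti (e17 𝔽 ∘ ![a, b, c, d]),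
    show wedge4 𝔽 (e17 𝔽 0) (e17 𝔽 1) (e17 𝔽 2) (e17 𝔽 3) = exteriorPower.ιMulti 𝔽 4 (e17 𝔽) from
      wedge4_eq_ιMulti (e17 𝔽)]
  split_ifs with h
  · let σ := Equiv.ofBijective _ h.bijective_of_finite
    rw [show e17 𝔽 ∘ ![a, b, c, d] = e17 𝔽 ∘ σ from rfl, AlternatingMap.map_perm,
      units_int_smul_eq_self_of_charTwo 𝔽]
  · exact AlternatingMap.map_eq_zero_of_not_injective _ _ fun h' => h h'.of_comp

-- `e17 𝔽 i` and `f17 𝔽 i` are the paper's `e_{i+1}` and `f_{i+1}`: this is `(f₃ ∧ f₄)^φ = e₁ ∧ e₂`.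
lemma phi_wedge2_f17_two_three (χ : (⋀[𝔽]^4 (Fin 4 → 𝔽)) ≃ₗ[𝔽] 𝔽)
    (hχ : χ (wedge4 𝔽 (e17 𝔽 0) (e17 𝔽 1) (e17 𝔽 2) (e17 𝔽 3)) = 1)
    (φ : (⋀[𝔽]^2 (Module.Dual 𝔽 (Fin 4 → 𝔽))) →ₗ[𝔽] ⋀[𝔽]^2 (Fin 4 → 𝔽))
    (hφ : ∀ (v₁ v₂ : Fin 4 → 𝔽) (f₁ f₂ : Module.Dual 𝔽 (Fin 4 → 𝔽)),
      χ (wmul (wedge2 𝔽 v₁ v₂) (φ (wedge2 𝔽 f₁ f₂))) = f₁ v₁ * f₂ v₂ - f₁ v₂ * f₂ v₁) :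
    φ (wedge2 𝔽 (f17 𝔽 2) (f17 𝔽 3)) = wedge2 𝔽 (e17 𝔽 0) (e17 𝔽 1) := by
  obtain ⟨c, hc⟩ := exists_sum_smul_wedge2_eq (Pi.basisFun 𝔽 (Fin 4))
    (φ (wedge2 𝔽 (f17 𝔽 2) (f17 𝔽 3)))
  simp only [Pi.basisFun_apply] at hc
  change ∑ p, c p • wedge2 𝔽 (e17 𝔽 p.1) (e17 𝔽 p.2) = _ at hc
  have hpair (k l : Fin 4) :
      ∑ p : Fin 4 × Fin 4, c p * (if Function.Injective ![k, l, p.1, p.2] then 1 else 0) =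
        f17 𝔽 2 (e17 𝔽 k) * f17 𝔽 3 (e17 𝔽 l) - f17 𝔽 2 (e17 𝔽 l) * f17 𝔽 3 (e17 𝔽 k) := by
    rw [← hφ, ← hc, wmul_sum_smul, map_sum]
    refine Finset.sum_congr rfl fun p _ => ?_
    rw [map_smul, wmul_wedge2_wedge2, wedge4_e17_of_charTwo, smul_eq_mul]
    split_ifs <;> simp [hχ]
  have h01 := hpair 2 3
  have h02 := hpair 1 3
  have h03 := hpair 1 2
  have h12 := hpair 0 3
  have h13 := hpair 0 2
  have h23 := hpair 0 1
  simp (config := { decide := true }) [Fintype.sum_prod_type, Fin.sum_univ_four, e17, f17]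
    at h01 h02 h03 h12 h13 h23
  rw [← hc]
  simp only [Fintype.sum_prod_type, Fin.sum_univ_four, wedge2_self, smul_zero, add_zero, zero_add,
    wedge2_comm (e17 𝔽 0) (e17 𝔽 1), wedge2_comm (e17 𝔽 0) (e17 𝔽 2),
    wedge2_comm (e17 𝔽 0) (e17 𝔽 3), wedge2_comm (e17 𝔽 1) (e17 𝔽 2),
    wedge2_comm (e17 𝔽 1) (e17 𝔽 3), wedge2_comm (e17 𝔽 2) (e17 𝔽 3)]
  linear_combination (norm := module) h01 • wedge2 𝔽 (e17 𝔽 0) (e17 𝔽 1) +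
    h02 • wedge2 𝔽 (e17 𝔽 0) (e17 𝔽 2) + h03 • wedge2 𝔽 (e17 𝔽 0) (e17 𝔽 3) +
    h12 • wedge2 𝔽 (e17 𝔽 1) (e17 𝔽 2) + h13 • wedge2 𝔽 (e17 𝔽 1) (e17 𝔽 3) +
    h23 • wedge2 𝔽 (e17 𝔽 2) (e17 𝔽 3)

end Standard

/-- the quadrangle `(e₁⊗f₁), (e₃⊗f₃), (e₁⊗(f₁+f₄)), ((e₃+λe₂)⊗f₃)` in
`H̃₃(𝔽)` (char 𝔽 = 2) is a 4-cycle, and its voltage equals `λ·(e₁ ∧ e₂)² ∈ S₂(Λ²V)`. -/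
theorem quadrangle_voltage_eq {𝔽 : Type*} [Field 𝔽] [CharP 𝔽 2]
    (χ : (⋀[𝔽]^4 (Fin 4 → 𝔽)) ≃ₗ[𝔽] 𝔽)
    (hχ : χ (wedge4 𝔽 (e17 𝔽 0) (e17 𝔽 1) (e17 𝔽 2) (e17 𝔽 3)) = 1)
    (φ : (⋀[𝔽]^2 (Module.Dual 𝔽 (Fin 4 → 𝔽))) →ₗ[𝔽] ⋀[𝔽]^2 (Fin 4 → 𝔽))
    (hφ : ∀ (v₁ v₂ : Fin 4 → 𝔽) (f₁ f₂ : Module.Dual 𝔽 (Fin 4 → 𝔽)),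
      χ (wmul (wedge2 𝔽 v₁ v₂) (φ (wedge2 𝔽 f₁ f₂))) = f₁ v₁ * f₂ v₂ - f₁ v₂ * f₂ v₁)
    (lam : 𝔽) :
    ((affPH 𝔽 (Fin 4 → 𝔽)).Adj (q17_0 𝔽) (q17_1 𝔽) ∧
     (affPH 𝔽 (Fin 4 → 𝔽)).Adj (q17_1 𝔽) (q17_2 𝔽) ∧
     (affPH 𝔽 (Fin 4 → 𝔽)).Adj (q17_2 𝔽) (q17_3 𝔽 lam) ∧
     (affPH 𝔽 (Fin 4 → 𝔽)).Adj (q17_3 𝔽 lam) (q17_0 𝔽)) ∧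
    volt φ (q17_0 𝔽) (q17_1 𝔽) + volt φ (q17_1 𝔽) (q17_2 𝔽) +
      volt φ (q17_2 𝔽) (q17_3 𝔽 lam) + volt φ (q17_3 𝔽 lam) (q17_0 𝔽) =
      lam • sqS 𝔽 (wedge2 𝔽 (e17 𝔽 0) (e17 𝔽 1)) := by
  refine ⟨by simp [affPH, q17_0, q17_1, q17_2, q17_3, e17, f17], ?_⟩
  rw [volt_eq_symMul _ _ _ (by simp [q17_0, e17, f17]) (by simp [q17_1, e17, f17]),
    volt_eq_symMul _ _ _ (by simp [q17_1, e17, f17]) (by simp [q17_2, e17, f17]),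
    volt_eq_symMul _ _ _ (by simp [q17_2, e17, f17]) (by simp [q17_3, e17, f17]),
    volt_eq_symMul _ _ _ (by simp [q17_3, e17, f17]) (by simp [q17_0, e17, f17])]
  simp only [q17_0, q17_1, q17_2, q17_3, wedge2_add_left, wedge2_add_right, wedge2_smul_left,
    wedge2_smul_right, map_add, wedge2_comm (e17 𝔽 0) (e17 𝔽 1), wedge2_comm (e17 𝔽 0) (e17 𝔽 2),
    wedge2_comm (f17 𝔽 0) (f17 𝔽 2), wedge2_comm (f17 𝔽 2) (f17 𝔽 3),
    phi_wedge2_f17_two_three χ hχ φ hφ]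
  exact symMul_quadrangle_sum_of_charTwo _ _ _ _ lam
end
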